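/- arXiv:1909.12043 — 5 statements merged into one kernel-verified Lean document; each statement's English description precedes it below -/
import Mathlib

section
/- Let G be a finite non-solvable group with solvable radical Sol(G), and let x ∈ G \ Sol(G). Then the set of neighbors of x in the non-solvable graph, N(x) = {y ∈ G \ Sol(G) : y ≠ x and ⟨x,y⟩ is not solvable}, is a union of cosets of Sol(G); in particular |Sol(G)| divides |N(x)|. -/
open Subgroup

def solvabilizer {G : Type*} [Group G] (x : G) : Set G :=
  {g | IsSolvable (closure ({g, x} : Set G))}

def solSet (G : Type*) [Group G] : Set G :=
  {x | ∀ y : G, IsSolvable (closure ({x, y} : Set G))}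

/-- `R` is the solvable radical of `G`: the largest solvable normal subgroup. -/
def IsSolvableRadical {G : Type*} [Group G] (R : Subgroup G) : Prop :=
  IsSolvable R ∧ R.Normal ∧ ∀ N : Subgroup G, N.Normal → IsSolvable N → N ≤ R

/-- The non-solvable graph: vertices are elements outside the solvable radical `R`,
two distinct vertices adjacent iff they generate a non-solvable subgroup. -/
def nonSolvableGraph (G : Type*) [Group G] (R : Subgroup G) :
    SimpleGraph {x : G // x ∉ R} where
  Adj a b := a ≠ b ∧ ¬ IsSolvable (closure ({(a : G), (b : G)} : Set G))
  symm := by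
    constructor
    rintro a b ⟨h1, h2⟩
    exact ⟨h1.symm, by rwa [Set.pair_comm]⟩
  loopless := by constructor; rintro a ⟨h1, _⟩; exact h1 rfl

/-- Neighborhood of `x` in the non-solvable graph, as a subset of `G`. -/
def nsNbhd {G : Type*} [Group G] (R : Subgroup G) (x : G) : Set G :=
  {y | y ∉ R ∧ y ≠ x ∧ ¬ IsSolvable (closure ({x, y} : Set G))}

/-- Neighborhood of `x` in the non-solvable graph where the solvable elements are
described by `solSet`. -/
def nsNbhdSet {G : Type*} [Group G] (x : G) : Set G :=
  {y | y ∉ solSet G ∧ y ≠ x ∧ ¬ IsSolvable (closure ({x, y} : Set G))}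

/-! Since `R` is solvable and normal, `⟨x, y⟩` is solvable exactly when its image in `G ⧸ R` is,
and that image only depends on the cosets `xR`, `yR`. So if `y` is a neighbour of `x`, so is
every `yz` with `z ∈ R` (`yz = x` is impossible, as `⟨x, x⟩` is cyclic), and `N(x)` is a union
of cosets of `R`. -/

open scoped Pointwise

namespace Subgroup

variable {G : Type*} [Group G]

theorem card_dvd_ncard_of_mul_mem (N : Subgroup G) {s : Set G}
    (hs : ∀ y ∈ s, ∀ z ∈ N, y * z ∈ s) : Nat.card N ∣ s.ncard := by
  have hsN : s * (N : Set G) = s := by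
    refine (Set.mul_subset_iff.mpr hs).antisymm fun y hy => ?_
    exact Set.mem_mul.mpr ⟨y, hy, 1, N.one_mem, mul_one y⟩
  rw [← Nat.card_coe_set_eq, ← hsN, card_mul_eq_card_subgroup_mul_card_quotient]
  exact dvd_mul_right _ _

variable {N : Subgroup G} [N.Normal] [Group.IsSolvable N]

theorem isSolvable_comap_mk' (S : Subgroup (G ⧸ N)) [Group.IsSolvable S] :
    Group.IsSolvable (S.comap (QuotientGroup.mk' N)) := by
  have hN : N ≤ S.comap (QuotientGroup.mk' N) := fun z hz => by
    simp [(QuotientGroup.eq_one_iff z).mpr hz]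
  refine Group.isSolvable_of_ker_le_range (inclusion hN) ((QuotientGroup.mk' N).subgroupComap S) ?_
  intro g hg
  have hgN : (g : G) ∈ N :=
    (QuotientGroup.eq_one_iff (g : G)).mp (congrArg Subtype.val hg)
  exact ⟨⟨g, hgN⟩, rfl⟩

theorem isSolvable_of_map_mk'_le {H K : Subgroup G} [Group.IsSolvable K]
    (h : H.map (QuotientGroup.mk' N) ≤ K.map (QuotientGroup.mk' N)) : Group.IsSolvable H := by
  have : Group.IsSolvable (K.map (QuotientGroup.mk' N)) :=
    Group.isSolvable_of_surjective ((QuotientGroup.mk' N).subgroupMap_surjective K)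
  have hle : H ≤ (K.map (QuotientGroup.mk' N)).comap (QuotientGroup.mk' N) :=
    (le_comap_map _ H).trans (comap_mono h)
  have := isSolvable_comap_mk' (K.map (QuotientGroup.mk' N))
  exact Group.isSolvable_of_isSolvable_injective (inclusion_injective hle)

theorem isSolvable_closure_pair_of_mk_eq {a b c : G} (hbc : (b : G ⧸ N) = c)
    (h : Group.IsSolvable (closure ({a, c} : Set G))) :
    Group.IsSolvable (closure ({a, b} : Set G)) := by
  refine isSolvable_of_map_mk'_le (N := N) (K := closure {a, c}) (le_of_eq ?_)
  simp only [MonoidHom.map_closure, Set.image_pair, QuotientGroup.mk'_apply, hbc]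

end Subgroup

open Subgroup in
theorem mul_mem_nsNbhd {G : Type*} [Group G] {R : Subgroup G} [R.Normal] [Group.IsSolvable R]
    {x y z : G} (hy : y ∈ nsNbhd R x) (hz : z ∈ R) : y * z ∈ nsNbhd R x := by
  obtain ⟨hyR, -, hxy⟩ := hy
  have hyz : ((y * z : G) : G ⧸ R) = y := QuotientGroup.mk_mul_of_mem y hz
  refine ⟨fun h => hyR ((R.mul_mem_cancel_right hz).mp h), ?_, fun h => ?_⟩
  · rintro rfl
    refine hxy (isSolvable_closure_pair_of_mk_eq hyz.symm ?_)
    rw [Set.pair_eq_singleton, ← zpowers_eq_closure]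
    exact Group.isSolvable_of_comm Std.Commutative.comm
  · exact hxy (isSolvable_closure_pair_of_mk_eq hyz.symm h)

theorem stmt6_general {G : Type*} [Group G]
    (R : Subgroup G) (hR : IsSolvableRadical R) (x : G) :
    (∀ y ∈ nsNbhd R x, ∀ z ∈ R, y * z ∈ nsNbhd R x) ∧
      Nat.card R ∣ (nsNbhd R x).ncard := by
  obtain ⟨hRsolv, hRnormal, -⟩ := hR
  have : Group.IsSolvable R := hRsolv
  have hmul : ∀ y ∈ nsNbhd R x, ∀ z ∈ R, y * z ∈ nsNbhd R x :=
    fun _ hy _ hz => mul_mem_nsNbhd hy hz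
  exact ⟨hmul, R.card_dvd_ncard_of_mul_mem hmul⟩

theorem stmt6 {G : Type*} [Group G] [Fintype G] (hG : ¬ IsSolvable G)
    (R : Subgroup G) (hR : IsSolvableRadical R) (x : G) (hx : x ∉ R) :
    (∀ y ∈ nsNbhd R x, ∀ z ∈ R, y * z ∈ nsNbhd R x) ∧
      Nat.card R ∣ (nsNbhd R x).ncard :=
  stmt6_general R hR x
end

section
/- Let G be a finite non-solvable group. Then the degree of a vertex x in the non-solvable graph of G equals |Sol(G)| times the degree of the coset x·Sol(G) in the non-solvable graph of G/Sol(G). -/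
open Subgroup

/-! Since `R` is solvable, a subgroup of `G` is solvable exactly when its image in `G ⧸ R` is.
Hence `y` is adjacent to `x` iff `y R` is adjacent to `x R`, so the neighbourhood of `x` is the full
preimage of the neighbourhood of `x R`, a union of cosets of `R`. -/

section Solvable

variable {G G' : Type*} [Group G] [Group G']

lemma isSolvable_closure_pair_of_mem_zpowers {a b : G} (h : b ∈ zpowers a) :
    Group.IsSolvable (closure ({a, b} : Set G)) := by
  have hle : closure ({a, b} : Set G) ≤ zpowers a := by
    rw [closure_le, Set.insert_subset_iff, Set.singleton_subset_iff]
    exact ⟨mem_zpowers a, h⟩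
  have : Group.IsSolvable (zpowers a) :=
    Group.isSolvable_of_comm fun x y => Std.Commutative.comm x y
  exact Group.isSolvable_of_isSolvable_injective (inclusion_injective hle)

instance isSolvable_subgroupOf (N H : Subgroup G) [Group.IsSolvable N] :
    Group.IsSolvable (N.subgroupOf H) :=
  Group.isSolvable_of_isSolvable_injective
    (f := (H.subtype.comp (N.subgroupOf H).subtype).codRestrict N fun z => z.2)
    fun _ _ h => Subtype.ext (Subtype.ext congr(($h : G)))

lemma isSolvable_iff_isSolvable_range_of_isSolvable_ker (f : G →* G')
    [Group.IsSolvable f.ker] : Group.IsSolvable G ↔ Group.IsSolvable f.range :=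
  ⟨fun _ => Group.isSolvable_of_surjective f.rangeRestrict_surjective,
    fun _ => Group.isSolvable_of_ker_le_range f.ker.subtype f.rangeRestrict (by simp)⟩

lemma isSolvable_iff_isSolvable_map_of_isSolvable_ker (f : G →* G') [Group.IsSolvable f.ker]
    (H : Subgroup G) : Group.IsSolvable H ↔ Group.IsSolvable (H.map f) := by
  have : Group.IsSolvable (f.domRestrict H).ker := by
    rw [f.ker_domRestrict]
    infer_instance
  rw [isSolvable_iff_isSolvable_range_of_isSolvable_ker (f.domRestrict H), f.domRestrict_range]

lemma isSolvable_closure_pair_iff_of_isSolvable_ker (f : G →* G') [Group.IsSolvable f.ker]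
    (x y : G) : Group.IsSolvable (closure ({x, y} : Set G)) ↔
      Group.IsSolvable (closure ({f x, f y} : Set G')) := by
  rw [isSolvable_iff_isSolvable_map_of_isSolvable_ker f, MonoidHom.map_closure, Set.image_pair]

lemma isSolvable_closure_pair_iff_quotient (R : Subgroup G) [R.Normal] [Group.IsSolvable R]
    (x y : G) : Group.IsSolvable (closure ({x, y} : Set G)) ↔
      Group.IsSolvable (closure ({(x : G ⧸ R), (y : G ⧸ R)} : Set (G ⧸ R))) := by
  have : Group.IsSolvable (QuotientGroup.mk' R).ker := by
    rw [QuotientGroup.ker_mk']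
    infer_instance
  exact isSolvable_closure_pair_iff_of_isSolvable_ker (QuotientGroup.mk' R) x y

end Solvable

section Neighbourhood

variable {G : Type*} [Group G]

lemma mem_nsNbhdSet_iff {a b : G} :
    b ∈ nsNbhdSet a ↔ ¬ Group.IsSolvable (closure ({a, b} : Set G)) := by
  refine ⟨fun h => h.2.2, fun h => ⟨fun hb => h ?_, fun hba => h ?_, h⟩⟩
  · rw [Set.pair_comm]
    exact hb a
  · exact isSolvable_closure_pair_of_mem_zpowers (hba ▸ mem_zpowers a)

lemma mem_nsNbhd_iff (R : Subgroup G) [R.Normal] [Group.IsSolvable R] {x y : G} :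
    y ∈ nsNbhd R x ↔ ¬ Group.IsSolvable (closure ({x, y} : Set G)) := by
  refine ⟨fun h => h.2.2, fun h => ⟨fun hy => h ?_, fun hyx => h ?_, h⟩⟩
  · rw [isSolvable_closure_pair_iff_quotient R, (QuotientGroup.eq_one_iff y).mpr hy]
    exact isSolvable_closure_pair_of_mem_zpowers (one_mem _)
  · exact isSolvable_closure_pair_of_mem_zpowers (hyx ▸ mem_zpowers x)

lemma nsNbhd_eq_preimage_nsNbhdSet (R : Subgroup G) [R.Normal] [Group.IsSolvable R] (x : G) :
    nsNbhd R x = QuotientGroup.mk ⁻¹' nsNbhdSet (x : G ⧸ R) := by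
  ext y
  rw [mem_nsNbhd_iff R, Set.mem_preimage, mem_nsNbhdSet_iff,
    isSolvable_closure_pair_iff_quotient R]

end Neighbourhood

theorem stmt7_general {G : Type*} [Group G]
    (R : Subgroup G) [R.Normal] (hR : IsSolvableRadical R) (x : G) :
    (nsNbhd R x).ncard = Nat.card R * (nsNbhdSet ((x : G ⧸ R))).ncard := by
  have : Group.IsSolvable R := hR.1
  rw [nsNbhd_eq_preimage_nsNbhdSet R x, ← Nat.card_coe_set_eq, QuotientGroup.card_preimage_mk,
    Nat.card_coe_set_eq]

theorem stmt7 {G : Type*} [Group G] [Fintype G] (hG : ¬ IsSolvable G)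
    (R : Subgroup G) [R.Normal] (hR : IsSolvableRadical R) (x : G) (hx : x ∉ R) :
    (nsNbhd R x).ncard = Nat.card R * (nsNbhdSet ((x : G ⧸ R))).ncard :=
  stmt7_general R hR x
end

section
/- Let G be a finite non-solvable group. Given that 6 ≤ deg(x) ≤ |G| − |Sol(G)| − 2 for every vertex x of the non-solvable graph of G, the solvability degree satisfies 2(|G|−|Sol(G)|)/|G|² + 2|Sol(G)|/|G| − |Sol(G)|²/|G|² ≤ P_s(G) ≤ 1 − 6(|G|−|Sol(G)|)/|G|². -/
open Subgroup

/-! Because the solvable radical `R` is normal and solvable, a pair meeting `R` generates a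
solvable group: modulo `R` it becomes cyclic. Hence the non-solvable pairs are exactly the
ordered edges of the non-solvable graph, the solvable pairs number `|G|² - ∑ deg`, and the
degree bounds `6 ≤ deg ≤ |G| - |R| - 2` on the `|G| - |R|` vertices give both inequalities. -/

theorem Set.ncard_setOf_prod {α β : Type*} [Fintype α] [Fintype β] (P : α → β → Prop) :
    {p : α × β | P p.1 p.2}.ncard = ∑ a, {b | P a b}.ncard := by
  classical
  simp only [Set.ncard_eq_toFinset_card', Set.toFinset_ofPred, Finset.card_filter]
  exact Fintype.sum_prod_type _

instance Subgroup.isSolvable_zpowers {G : Type*} [Group G] (g : G) :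
    Group.IsSolvable (zpowers g) :=
  Group.isSolvable_of_comm (IsMulCommutative.is_comm).comm

theorem isSolvable_closure_pair_of_mem_left {G : Type*} [Group G] {R : Subgroup G} [R.Normal]
    [Group.IsSolvable R] {u : G} (hu : u ∈ R) (v : G) :
    Group.IsSolvable (closure ({u, v} : Set G)) := by
  set H := closure ({u, v} : Set G)
  set C := zpowers (QuotientGroup.mk' R v)
  have hH : H ≤ C.comap (QuotientGroup.mk' R) := by
    rw [closure_le, Set.insert_subset_iff, Set.singleton_subset_iff]
    refine ⟨?_, mem_zpowers _⟩
    rw [SetLike.mem_coe, mem_comap, QuotientGroup.mk'_apply, (QuotientGroup.eq_one_iff u).mpr hu]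
    exact one_mem C
  have : Group.IsSolvable ↥(R ⊓ H) :=
    Group.isSolvable_of_isSolvable_injective (inclusion_injective inf_le_left)
  refine Group.isSolvable_of_ker_le_range (inclusion (inf_le_right : R ⊓ H ≤ H))
    (((QuotientGroup.mk' R).comp H.subtype).codRestrict C fun x => hH x.2) fun x hx => ?_
  have hxR : QuotientGroup.mk' R x = 1 := congrArg Subtype.val (MonoidHom.mem_ker.mp hx)
  exact ⟨⟨x, (QuotientGroup.eq_one_iff _).mp hxR, x.2⟩, rfl⟩

section NonSolvableGraph

variable {G : Type*} [Group G] {R : Subgroup G} [R.Normal] [Group.IsSolvable R]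

theorem nsNbhd_eq_setOf_not_isSolvable (u : G) :
    nsNbhd R u = {v | ¬ Group.IsSolvable (closure ({u, v} : Set G))} := by
  ext v
  refine ⟨fun hv => hv.2.2, fun hv => ⟨fun hvR => hv ?_, fun hvu => hv ?_, hv⟩⟩
  · rw [Set.pair_comm]
    exact isSolvable_closure_pair_of_mem_left hvR u
  · rw [hvu, Set.pair_eq_singleton, ← zpowers_eq_closure]
    infer_instance

theorem nsNbhd_eq_empty_of_mem {u : G} (hu : u ∈ R) : nsNbhd R u = ∅ := by
  rw [nsNbhd_eq_setOf_not_isSolvable, Set.eq_empty_iff_forall_notMem]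
  exact fun v hv => hv (isSolvable_closure_pair_of_mem_left hu v)

theorem ncard_isSolvable_pairs_add_sum_ncard_nsNbhd [Fintype G] :
    {p : G × G | Group.IsSolvable (closure ({p.1, p.2} : Set G))}.ncard +
      ∑ u, (nsNbhd R u).ncard = Fintype.card G ^ 2 := by
  rw [Set.ncard_setOf_prod fun u v => Group.IsSolvable (closure ({u, v} : Set G)),
    ← Finset.sum_add_distrib, sq, ← smul_eq_mul, ← Finset.card_univ,
    ← Finset.sum_const]
  refine Finset.sum_congr rfl fun u _ => ?_
  rw [nsNbhd_eq_setOf_not_isSolvable, Finset.card_univ, ← Nat.card_eq_fintype_card]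
  exact Set.ncard_add_ncard_compl _

end NonSolvableGraph

theorem Subgroup.card_filter_notMem_add_card {G : Type*} [Group G] [Fintype G] (R : Subgroup G)
    [DecidablePred (· ∈ R)] : (Finset.univ.filter (· ∉ R)).card + Nat.card R = Fintype.card G := by
  rw [add_comm, Nat.card_eq_fintype_card, Fintype.card_subtype]
  exact Finset.card_filter_add_card_filter_not _

theorem stmt9_general {G : Type*} [Group G] [Fintype G]
    (R : Subgroup G) (hR : IsSolvableRadical R)
    (hdeg : ∀ x : G, x ∉ R →
      6 ≤ (nsNbhd R x).ncard ∧ (nsNbhd R x).ncard ≤ Fintype.card G - Nat.card R - 2) :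
    2 * ((Fintype.card G : ℝ) - Nat.card R) / (Fintype.card G : ℝ) ^ 2 +
        2 * (Nat.card R : ℝ) / (Fintype.card G : ℝ) -
        (Nat.card R : ℝ) ^ 2 / (Fintype.card G : ℝ) ^ 2 ≤
      (Set.ncard {p : G × G | IsSolvable (closure ({p.1, p.2} : Set G))} : ℝ) /
        (Fintype.card G : ℝ) ^ 2 ∧
    (Set.ncard {p : G × G | IsSolvable (closure ({p.1, p.2} : Set G))} : ℝ) /
        (Fintype.card G : ℝ) ^ 2 ≤
      1 - 6 * ((Fintype.card G : ℝ) - Nat.card R) / (Fintype.card G : ℝ) ^ 2 := by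
  classical
  have : Group.IsSolvable R := hR.1
  have : R.Normal := hR.2.1
  set V := Finset.univ.filter (· ∉ R)
  have hSD : (Set.ncard {p : G × G | IsSolvable (closure ({p.1, p.2} : Set G))} : ℝ) +
      ∑ u ∈ V, ((nsNbhd R u).ncard : ℝ) = (Fintype.card G : ℝ) ^ 2 := by
    have hsum : ∑ u ∈ V, (nsNbhd R u).ncard = ∑ u, (nsNbhd R u).ncard :=
      Finset.sum_filter_of_ne fun u _ hu hmem =>
        hu (by rw [nsNbhd_eq_empty_of_mem hmem, Set.ncard_empty])
    exact_mod_cast hsum ▸ ncard_isSolvable_pairs_add_sum_ncard_nsNbhd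
  have hV : (V.card : ℝ) = Fintype.card G - Nat.card R := by
    rw [← R.card_filter_notMem_add_card]; push_cast; ring
  have hdegV : ∀ u ∈ V, 6 ≤ ((nsNbhd R u).ncard : ℝ) ∧
      ((nsNbhd R u).ncard : ℝ) ≤ Fintype.card G - Nat.card R - 2 := by
    intro u hu
    obtain ⟨hlo, hhi⟩ := hdeg u (Finset.mem_filter.mp hu).2
    -- `6 ≤ deg` rules out truncation in the natural subtraction `|G| - |R| - 2`
    have : (nsNbhd R u).ncard + Nat.card R + 2 ≤ Fintype.card G := by omega
    have : ((nsNbhd R u).ncard : ℝ) + Nat.card R + 2 ≤ Fintype.card G := by exact_mod_cast this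
    exact ⟨by exact_mod_cast hlo, by linarith⟩
  have hlow := Finset.card_nsmul_le_sum V _ _ fun u hu => (hdegV u hu).1
  have hhigh := Finset.sum_le_card_nsmul V _ _ fun u hu => (hdegV u hu).2
  rw [nsmul_eq_mul, hV] at hlow hhigh
  have hn : (0 : ℝ) < Fintype.card G := by exact_mod_cast Fintype.card_pos
  constructor
  · rw [le_div_iff₀ (by positivity)]
    field_simp
    linarith
  · rw [div_le_iff₀ (by positivity)]
    field_simp
    linarith

theorem stmt9 {G : Type*} [Group G] [Fintype G] (hG : ¬ IsSolvable G)
    (R : Subgroup G) (hR : IsSolvableRadical R)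
    (hdeg : ∀ x : G, x ∉ R →
      6 ≤ (nsNbhd R x).ncard ∧ (nsNbhd R x).ncard ≤ Fintype.card G - Nat.card R - 2) :
    2 * ((Fintype.card G : ℝ) - Nat.card R) / (Fintype.card G : ℝ) ^ 2 +
        2 * (Nat.card R : ℝ) / (Fintype.card G : ℝ) -
        (Nat.card R : ℝ) ^ 2 / (Fintype.card G : ℝ) ^ 2 ≤
      (Set.ncard {p : G × G | IsSolvable (closure ({p.1, p.2} : Set G))} : ℝ) /
        (Fintype.card G : ℝ) ^ 2 ∧
    (Set.ncard {p : G × G | IsSolvable (closure ({p.1, p.2} : Set G))} : ℝ) /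
        (Fintype.card G : ℝ) ^ 2 ≤
      1 - 6 * ((Fintype.card G : ℝ) - Nat.card R) / (Fintype.card G : ℝ) ^ 2 :=
  stmt9_general R hR hdeg
end

section
/- Let G be a finite non-solvable group such that |Sol_G(x)| ≤ |G|/2 for all x ∈ G \ Sol(G). Then the non-solvable graph of G is Hamiltonian. -/
open Subgroup

/-!
The neighbours of a vertex `x` of the non-solvable graph are exactly the elements outside
`Sol_G(x)`: this set contains `x` and the solvable radical `R`, since an element of `R` and `x`
generate an extension of a subgroup of `R` by a cyclic group. Hence
`deg x = |G| - |Sol_G(x)| ≥ |G| / 2`, which is more than half the number `|G| - |R|` of vertices,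
and Dirac's theorem applies.

Dirac's theorem is proved with a longest path `v₀ … vₖ`. All neighbours of its endpoints lie on
it, so by pigeonhole `v₀ ~ vᵢ₊₁` and `vₖ ~ vᵢ` for some `i`, which closes `v₀ … vᵢ vₖ … vᵢ₊₁`
into a cycle through the same vertices. By maximality this cycle is closed under adjacency, and by
the degree bound every vertex has a neighbour on it, so it is Hamiltonian.
-/

namespace List
variable {α : Type*} {R : α → α → Prop}

theorem exists_isChain_cons_isRotated {c : List α} (hc : Cycle.Chain R (c : Cycle α)) {x : α}
    (hx : x ∈ c) : ∃ t, (x :: t) ~r c ∧ (x :: t).IsChain R := by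
  obtain ⟨s, t, rfl⟩ := append_of_mem hx
  have hrot : x :: (t ++ s) ~r s ++ x :: t := by
    simpa using isRotated_append (l := x :: t) (l' := s)
  refine ⟨t ++ s, hrot, ?_⟩
  rw [← Cycle.coe_eq_coe.mpr hrot, Cycle.chain_coe_cons] at hc
  exact hc.infix ⟨[], [x], by simp⟩

end List

namespace SimpleGraph
variable {α : Type*} {G : SimpleGraph α}

theorem degree_lt_card_of_forall_adj_mem {v : α} [Fintype (G.neighborSet v)] {s : Finset α}
    (hv : v ∈ s) (h : ∀ w, G.Adj v w → w ∈ s) : G.degree v < s.card :=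
  Finset.card_lt_card <|
    (Finset.ssubset_iff_of_subset fun w hw => h w ((G.mem_neighborFinset v w).1 hw)).2
      ⟨v, hv, by simp⟩

theorem degree_le_card_filter_adj {ι : Type*} {v : α} [Fintype (G.neighborSet v)]
    [DecidableRel G.Adj] {s : Finset ι} {f : ι → α} (h : ∀ w, G.Adj v w → ∃ i ∈ s, f i = w) :
    G.degree v ≤ (s.filter fun i => G.Adj v (f i)).card := by
  classical
  refine (Finset.card_le_card fun w hw => ?_).trans (Finset.card_image_le (f := f))
  obtain ⟨i, hi, rfl⟩ := h w ((G.mem_neighborFinset v w).1 hw)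
  exact Finset.mem_image_of_mem f (Finset.mem_filter.2 ⟨hi, (G.mem_neighborFinset v _).1 hw⟩)

theorem exists_adj_mem_of_card_le_degree_add_card [Fintype α] [DecidableEq α]
    [DecidableRel G.Adj] {s : Finset α} {w : α} (hw : w ∉ s)
    (h : Fintype.card α ≤ G.degree w + s.card) : ∃ x ∈ s, G.Adj w x := by
  by_contra! hno
  have hsub : G.neighborFinset w ⊆ (insert w s)ᶜ := fun x hx => by
    rw [mem_neighborFinset] at hx
    simpa [hx.ne'] using fun hxs => hno x hxs hx
  have := Finset.card_le_card hsub
  rw [Finset.card_compl, Finset.card_insert_of_notMem hw, card_neighborFinset_eq_degree] at this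
  have := Finset.card_le_univ (insert w s)
  rw [Finset.card_insert_of_notMem hw] at this
  omega

theorem exists_isChain_nodup_forall_length_le [Finite α] (G : SimpleGraph α) :
    ∃ l : List α, (l.IsChain G.Adj ∧ l.Nodup) ∧
      ∀ l' : List α, l'.IsChain G.Adj → l'.Nodup → l'.length ≤ l.length := by
  have := Fintype.ofFinite α
  obtain ⟨l, hl, hmax⟩ :=
    Set.exists_max_image {l : List α | l.IsChain G.Adj ∧ l.Nodup} List.length
      ((List.finite_length_le α (Fintype.card α)).subset fun l hl => hl.2.length_le_card)
      ⟨[], by simp⟩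
  exact ⟨l, hl, fun l' h₁ h₂ => hmax l' ⟨h₁, h₂⟩⟩

theorem mem_of_adj_head_of_forall_length_le {l : List α} (hl : l.IsChain G.Adj)
    (hnd : l.Nodup) (hne : l ≠ [])
    (hmax : ∀ l' : List α, l'.IsChain G.Adj → l'.Nodup → l'.length ≤ l.length)
    {w : α} (hw : G.Adj (l.head hne) w) : w ∈ l := by
  by_contra hwl
  obtain ⟨a, m, rfl⟩ := List.exists_cons_of_ne_nil hne
  have := hmax (w :: a :: m) (hl.cons_cons hw.symm) (List.nodup_cons.2 ⟨hwl, hnd⟩)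
  simp at this

theorem exists_adj_getElem_succ_and_adj_getElem [Fintype α] [DecidableRel G.Adj] {l : List α}
    (hne : l ≠ []) (hhead : ∀ w, G.Adj (l.head hne) w → w ∈ l)
    (hlast : ∀ w, G.Adj (l.getLast hne) w → w ∈ l)
    (hdeg : l.length ≤ G.degree (l.head hne) + G.degree (l.getLast hne)) :
    ∃ i, ∃ _ : i + 1 < l.length, G.Adj (l.head hne) l[i + 1] ∧ G.Adj (l.getLast hne) l[i] := by
  classical
  set u := l.head hne
  set v := l.getLast hne
  have hS := degree_le_card_filter_adj (G := G) (v := u) (s := Finset.range (l.length - 1))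
    (f := fun i => l.getD (i + 1) u) fun w hw => by
      obtain ⟨j, hj, rfl⟩ := List.mem_iff_getElem.1 (hhead w hw)
      have hj0 : j ≠ 0 := by
        rintro rfl
        exact hw.ne (List.getElem_zero _).symm
      exact ⟨j - 1, Finset.mem_range.2 (by omega), by
        rw [Nat.sub_add_cancel (by omega), List.getD_eq_getElem]⟩
  have hT := degree_le_card_filter_adj (G := G) (v := v) (s := Finset.range (l.length - 1))
    (f := fun i => l.getD i v) fun w hw => by
      obtain ⟨j, hj, rfl⟩ := List.mem_iff_getElem.1 (hlast w hw)
      have hjk : j ≠ l.length - 1 := by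
        rintro rfl
        exact hw.ne (List.getLast_eq_getElem hne)
      exact ⟨j, Finset.mem_range.2 (by omega), List.getD_eq_getElem _ _ hj⟩
  have hk : l.length - 1 < G.degree u + G.degree v := by
    have := List.length_pos_of_ne_nil hne
    omega
  obtain ⟨i, hi⟩ := Finset.inter_nonempty_of_card_lt_card_add_card (Finset.filter_subset _ _)
    (Finset.filter_subset _ _) (by rw [Finset.card_range]; exact hk.trans_le (add_le_add hS hT))
  simp only [Finset.mem_inter, Finset.mem_filter, Finset.mem_range] at hi
  obtain ⟨⟨hik, hui⟩, -, hvi⟩ := hi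
  refine ⟨i, by omega, ?_, ?_⟩
  · rwa [List.getD_eq_getElem] at hui
  · rwa [List.getD_eq_getElem] at hvi

theorem chain_coe_take_append_reverse_drop {l : List α} (hl : l.IsChain G.Adj) (hne : l ≠ [])
    {i : ℕ} (hi : i + 1 < l.length) (hhead : G.Adj (l.head hne) l[i + 1])
    (hlast : G.Adj (l.getLast hne) l[i]) :
    Cycle.Chain G.Adj ↑(l.take (i + 1) ++ (l.drop (i + 1)).reverse) := by
  obtain ⟨a, m, rfl⟩ := List.exists_cons_of_ne_nil hne
  have hi' : i < m.length := by simp at hi; omega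
  suffices h : ((a :: m).take (i + 1) ++ ((m.drop i).reverse ++ [a])).IsChain G.Adj by
    rw [List.drop_succ_cons, List.take_succ_cons, List.cons_append, Cycle.chain_coe_cons]
    simpa using h
  rw [List.isChain_append, List.isChain_append]
  refine ⟨hl.take _, ⟨List.isChain_reverse.mpr ((hl.drop (i + 1)).imp fun _ _ => G.adj_symm),
    List.isChain_singleton a, ?_⟩, ?_⟩
  · simpa [List.getLast?_reverse, List.head?_drop, List.getElem?_eq_getElem hi'] using hhead.symm
  · have hm : m ≠ [] := List.ne_nil_of_length_pos (by omega)
    have hA : (a :: m.take i).getLast? = some (a :: m)[i] := by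
      rw [← List.take_succ_cons, List.getLast?_take]
      simp [List.getElem?_eq_getElem (show i < (a :: m).length by simp; omega)]
    simpa [hA, List.head?_reverse, List.getLast?_drop, List.getLast?_eq_some_getLast hm,
      Nat.not_le.2 hi', List.getLast_cons hm] using hlast.symm

theorem exists_perm_chain_coe_of_forall_length_le [Fintype α] [DecidableRel G.Adj] {l : List α}
    (hl : l.IsChain G.Adj) (hnd : l.Nodup) (hne : l ≠ [])
    (hmax : ∀ l' : List α, l'.IsChain G.Adj → l'.Nodup → l'.length ≤ l.length)
    (hdeg : ∀ v, Fintype.card α ≤ 2 * G.degree v) :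
    ∃ c : List α, c.Perm l ∧ Cycle.Chain G.Adj (c : Cycle α) := by
  have hhead : ∀ w, G.Adj (l.head hne) w → w ∈ l := fun _ =>
    mem_of_adj_head_of_forall_length_le hl hnd hne hmax
  have hlast : ∀ w, G.Adj (l.getLast hne) w → w ∈ l := fun w hw => by
    simpa using mem_of_adj_head_of_forall_length_le (l := l.reverse)
      (List.isChain_reverse.mpr (hl.imp fun _ _ => G.adj_symm)) (List.nodup_reverse.mpr hnd)
      (by simpa using hne) (by simpa using hmax) (w := w) (by simpa using hw)
  obtain ⟨i, hi, hui, hvi⟩ := exists_adj_getElem_succ_and_adj_getElem hne hhead hlast (by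
    have := hdeg (l.head hne); have := hdeg (l.getLast hne); have := hnd.length_le_card; omega)
  refine ⟨l.take (i + 1) ++ (l.drop (i + 1)).reverse, ?_,
    chain_coe_take_append_reverse_drop hl hne hi hui hvi⟩
  simpa using (List.reverse_perm (l.drop (i + 1))).append_left (l.take (i + 1))

theorem mem_of_adj_of_chain_coe {c : List α} (hc : Cycle.Chain G.Adj (c : Cycle α))
    (hnd : c.Nodup) (hmax : ∀ l : List α, l.IsChain G.Adj → l.Nodup → l.length ≤ c.length)
    {x w : α} (hx : x ∈ c) (hwx : G.Adj w x) : w ∈ c := by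
  by_contra hw
  obtain ⟨t, hrot, ht⟩ := List.exists_isChain_cons_isRotated hc hx
  have := hmax (w :: x :: t) (ht.cons_cons hwx)
    (List.nodup_cons.2 ⟨fun h => hw (hrot.mem_iff.1 h), hrot.nodup_iff.2 hnd⟩)
  simp [← hrot.perm.length_eq] at this

theorem isHamiltonian_of_chain_coe [Fintype α] [DecidableEq α] {c : List α}
    (hc : Cycle.Chain G.Adj (c : Cycle α)) (hnd : c.Nodup) (hcover : ∀ v, v ∈ c)
    (h3 : 3 ≤ Fintype.card α) : G.IsHamiltonian := by
  intro _
  have hlen : c.length = Fintype.card α := by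
    refine le_antisymm hnd.length_le_card ?_
    calc Fintype.card α = (Finset.univ : Finset α).card := Finset.card_univ.symm
      _ ≤ c.toFinset.card := Finset.card_le_card fun v _ => List.mem_toFinset.mpr (hcover v)
      _ ≤ c.length := List.toFinset_card_le c
  obtain ⟨u, l, rfl⟩ : ∃ u l, c = u :: l :=
    List.exists_cons_of_ne_nil (List.ne_nil_of_length_pos (by omega))
  rw [Cycle.chain_coe_cons] at hc
  obtain ⟨p, hsupp⟩ : ∃ p : G.Walk u u, p.support = u :: (l ++ [u]) :=
    ⟨_, (Walk.support_copy _ rfl (by simp)).trans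
      (Walk.support_ofSupport (List.cons_ne_nil _ _) hc)⟩
  have hplen : p.length = Fintype.card α := by
    have := p.length_support
    rw [hsupp] at this
    simp at this hlen
    omega
  refine ⟨u, p, Walk.isHamiltonianCycle_iff_isCycle_and_length_eq.mpr
    ⟨Walk.isCycle_iff_isPath_tail_and_le_length.mpr ⟨?_, by omega⟩, hplen⟩⟩
  rw [Walk.isPath_def, Walk.support_tail_of_not_nil _ (Walk.not_nil_iff_lt_length.mpr (by omega)),
    hsupp]
  exact List.nodup_append_comm.mp hnd

/-- Dirac's theorem. -/
theorem isHamiltonian_of_card_le_two_mul_degree [Fintype α] [DecidableEq α]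
    [DecidableRel G.Adj] (h3 : 3 ≤ Fintype.card α) (hdeg : ∀ v, Fintype.card α ≤ 2 * G.degree v) :
    G.IsHamiltonian := by
  obtain ⟨l, ⟨hl, hnd⟩, hmax⟩ := exists_isChain_nodup_forall_length_le G
  obtain ⟨a⟩ : Nonempty α := Fintype.card_pos_iff.mp (by omega)
  have hne : l ≠ [] :=
    List.ne_nil_of_length_pos (hmax [a] (List.isChain_singleton a) (List.nodup_singleton a))
  obtain ⟨c, hperm, hc⟩ := exists_perm_chain_coe_of_forall_length_le hl hnd hne hmax hdeg
  have hcnd : c.Nodup := hperm.nodup_iff.2 hnd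
  rw [← hperm.length_eq] at hmax
  have hclosed : ∀ x ∈ c, ∀ w, G.Adj w x → w ∈ c := fun _ hx _ =>
    mem_of_adj_of_chain_coe hc hcnd hmax hx
  obtain ⟨v, hv⟩ : ∃ v, v ∈ c :=
    (List.exists_mem_of_ne_nil l hne).imp fun _ => hperm.mem_iff.2
  have hv_deg : G.degree v < c.toFinset.card :=
    degree_lt_card_of_forall_adj_mem (List.mem_toFinset.2 hv) fun w hw =>
      List.mem_toFinset.2 (hclosed v hv w hw.symm)
  refine isHamiltonian_of_chain_coe hc hcnd (fun w => ?_) h3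
  by_contra hw
  obtain ⟨x, hx, hwx⟩ := exists_adj_mem_of_card_le_degree_add_card (G := G) (s := c.toFinset)
    (w := w) (by simpa using hw) (by have := hdeg v; have := hdeg w; omega)
  exact hw (hclosed x (List.mem_toFinset.1 hx) w hwx)

end SimpleGraph

namespace Group
variable {G : Type*} [Group G]

theorem isSolvable_of_map_mk'_le {N H : Subgroup G} [N.Normal] [IsSolvable N]
    {K : Subgroup (G ⧸ N)} [IsSolvable K] (hHK : H.map (QuotientGroup.mk' N) ≤ K) :
    IsSolvable H := by
  have : IsSolvable ↥(N ⊓ H) :=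
    isSolvable_of_isSolvable_injective (inclusion_injective inf_le_left)
  refine isSolvable_of_ker_le_range (inclusion (inf_le_right : N ⊓ H ≤ H))
    (((QuotientGroup.mk' N).comp H.subtype).codRestrict K fun h => hHK ⟨h, h.2, rfl⟩)
    fun h hh => ?_
  have hN : (h : G) ∈ N := (QuotientGroup.eq_one_iff _).mp congr($hh.1)
  exact ⟨⟨h, hN, h.2⟩, rfl⟩

theorem isSolvable_zpowers (x : G) : IsSolvable (zpowers x) :=
  isSolvable_of_comm mul_comm'

theorem isSolvable_closure_pair_of_mem {N : Subgroup G} [N.Normal] [IsSolvable N] {g : G}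
    (hg : g ∈ N) (x : G) : IsSolvable (closure ({g, x} : Set G)) := by
  have := isSolvable_zpowers (x : G ⧸ N)
  refine isSolvable_of_map_mk'_le (N := N) (K := zpowers (x : G ⧸ N)) ?_
  rw [MonoidHom.map_closure, closure_le, Set.image_pair]
  rintro _ (rfl | rfl)
  · simp [(QuotientGroup.eq_one_iff g).mpr hg]
  · exact mem_zpowers _

theorem isSolvable_closure_pair_self (x : G) : IsSolvable (closure ({x, x} : Set G)) := by
  rw [Set.pair_eq_singleton, ← zpowers_eq_closure]
  exact isSolvable_zpowers x

end Group

theorem ncard_neighborSet_nonSolvableGraph_add_ncard_solvabilizer {G : Type*} [Group G]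
    [Finite G] {R : Subgroup G} [R.Normal] [Group.IsSolvable R] (x : {x : G // x ∉ R}) :
    ((nonSolvableGraph G R).neighborSet x).ncard + (solvabilizer (x : G)).ncard = Nat.card G := by
  have himage :
      Subtype.val '' (nonSolvableGraph G R).neighborSet x = (solvabilizer (x : G))ᶜ := by
    ext g
    simp only [Set.mem_image, SimpleGraph.mem_neighborSet, Set.mem_compl_iff, solvabilizer,
      Set.mem_ofPred_eq]
    rw [Set.pair_comm g]
    constructor
    · rintro ⟨y, ⟨-, hns⟩, rfl⟩
      exact hns
    · intro hns
      have hgR : g ∉ R := fun hgR => hns (by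
        rw [Set.pair_comm]; exact Group.isSolvable_closure_pair_of_mem hgR x)
      refine ⟨⟨g, hgR⟩, ⟨fun hxg => hns ?_, hns⟩, rfl⟩
      rw [show g = x from congrArg Subtype.val hxg.symm]
      exact Group.isSolvable_closure_pair_self _
  rw [← Set.ncard_image_of_injective _ Subtype.val_injective, himage, Set.ncard_compl_add_ncard]

open scoped Classical in
theorem stmt13 {G : Type*} [Group G] [Fintype G] (hG : ¬ IsSolvable G)
    (R : Subgroup G) (hR : IsSolvableRadical R)
    (h : ∀ x : G, x ∉ R → 2 * (solvabilizer x).ncard ≤ Fintype.card G) :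
    (nonSolvableGraph G R).IsHamiltonian := by
  have : Group.IsSolvable R := hR.1
  have : R.Normal := hR.2.1
  have hcard : Fintype.card {x : G // x ∉ R} < Fintype.card G :=
    Fintype.card_subtype_lt (x := 1) (not_not.2 R.one_mem)
  have hdeg : ∀ x, Fintype.card {x : G // x ∉ R} + 1 ≤ 2 * (nonSolvableGraph G R).degree x := by
    intro x
    have := ncard_neighborSet_nonSolvableGraph_add_ncard_solvabilizer (R := R) x
    rw [Set.ncard_eq_toFinset_card', Set.toFinset_card, SimpleGraph.card_neighborSet_eq_degree,
      Nat.card_eq_fintype_card] at this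
    have := h x x.2
    omega
  obtain ⟨x⟩ : Nonempty {x : G // x ∉ R} := by
    rw [nonempty_subtype]
    by_contra! hall
    exact hG (Group.isSolvable_of_surjective (f := R.subtype) fun g => ⟨⟨g, hall g⟩, rfl⟩)
  have := (nonSolvableGraph G R).degree_lt_card_verts x
  exact SimpleGraph.isHamiltonian_of_card_le_two_mul_degree (by have := hdeg x; omega)
    fun v => by have := hdeg v; omega
end

section
/- Let G be a finite non-solvable group. Then the domination number of the non-solvable graph of G is not equal to 1, i.e., no single vertex is adjacent to all other vertices. -/
open Subgroup

/-! A vertex `x` with `x⁻¹ ≠ x` is not adjacent to `x⁻¹`, as `⟨x, x⁻¹⟩` is cyclic. An involution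
`x` outside the radical is not central, because the centre is a solvable normal subgroup; so some
conjugate `y ≠ x` exists, and two involutions generate a dihedral, hence solvable, group. -/

open scoped IsMulCommutative

section

variable {G : Type*} [Group G]

theorem isSolvable_closure_pair_of_commute {x y : G} (h : Commute x y) :
    Group.IsSolvable (closure {x, y}) := by
  have : IsMulCommutative (closure {x, y}) := isMulCommutative_closure <| by
    rintro a (rfl | rfl) b (rfl | rfl)
    exacts [rfl, h, h.symm, rfl]
  infer_instance

/-- The group is dihedral: `x * y` generates a normal cyclic subgroup, since both generators
invert it, and the quotient is cyclic, generated by the common image of `x` and `y`. -/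
theorem isSolvable_of_closure_pair_eq_top {x y : G} (hx : x⁻¹ = x) (hy : y⁻¹ = y)
    (hgen : closure {x, y} = ⊤) : Group.IsSolvable G := by
  set N := zpowers (x * y)
  have conj_eq_inv : ∀ g ∈ ({x, y} : Set G), g * (x * y) * g⁻¹ = (x * y)⁻¹ := by
    rintro g (rfl | rfl)
    · simp only [mul_inv_rev, hx, hy, ← mul_assoc, mul_eq_one_iff_inv_eq.2 hx, one_mul]
    · simp only [mul_inv_rev, hx, hy, mul_assoc, mul_eq_one_iff_inv_eq.2 hy, mul_one]
  have : N.Normal := by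
    rw [← normalizer_eq_top_iff, eq_top_iff, ← hgen, closure_le]
    intro g hg
    rw [SetLike.mem_coe, mem_normalizer_iff_map_conj_eq, MonoidHom.map_zpowers,
      MonoidHom.coe_coe, MulAut.conj_apply, conj_eq_inv g hg, zpowers_inv]
  have : IsCyclic (G ⧸ N) := by
    refine isCyclic_iff_exists_zpowers_eq_top.2 ⟨x, ?_⟩
    have hxy : (x : G ⧸ N) = y := by
      rw [QuotientGroup.eq, hx]
      exact mem_zpowers _
    rw [← map_top_of_surjective _ (QuotientGroup.mk'_surjective N), ← hgen,
      MonoidHom.map_closure, Set.image_pair, zpowers_eq_closure]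
    simp [hxy]
  exact (Group.isSolvable_iff_subgroup_quotient N).2 ⟨inferInstance, inferInstance⟩

theorem isSolvable_closure_pair_of_inv_eq_self {x y : G} (hx : x⁻¹ = x) (hy : y⁻¹ = y) :
    Group.IsSolvable (closure {x, y}) := by
  refine isSolvable_of_closure_pair_eq_top (x := ⟨x, subset_closure (by simp)⟩)
    (y := ⟨y, subset_closure (by simp)⟩) (Subtype.ext hx) (Subtype.ext hy) ?_
  rw [← closure_closure_coe_preimage (k := {x, y})]
  congr 1
  ext
  simp [Subtype.ext_iff]

end

theorem IsSolvableRadical.center_le {G : Type*} [Group G] {R : Subgroup G}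
    (hR : IsSolvableRadical R) : center G ≤ R :=
  hR.2.2 _ inferInstance (inferInstance : Group.IsSolvable (center G))

theorem stmt14_general {G : Type*} [Group G]
    (R : Subgroup G) (hR : IsSolvableRadical R) :
    ¬ ∃ x : {x : G // x ∉ R}, ∀ y, y ≠ x → (nonSolvableGraph G R).Adj x y := by
  rintro ⟨⟨x, hxR⟩, hdom⟩
  have not_solvable : ∀ y ∉ R, y ≠ x → ¬ Group.IsSolvable (closure {x, y}) := fun y hyR hyx ↦
    (hdom ⟨y, hyR⟩ (by simpa [Subtype.ext_iff] using hyx)).2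
  by_cases hx : x⁻¹ = x
  · obtain ⟨g, hg⟩ : ∃ g, g * x ≠ x * g := by
      by_contra! h
      exact hxR (hR.center_le (mem_center_iff.2 h))
    refine not_solvable (g * x * g⁻¹) ?_ ?_ (isSolvable_closure_pair_of_inv_eq_self hx ?_)
    · rwa [mul_assoc, hR.2.1.mem_comm_iff, inv_mul_cancel_right]
    · exact mul_inv_eq_iff_eq_mul.not.2 hg
    · simp [mul_assoc, hx]
  · exact not_solvable x⁻¹ (inv_mem_iff.not.2 hxR) hx
      (isSolvable_closure_pair_of_commute (Commute.refl x).inv_right)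

theorem stmt14 {G : Type*} [Group G] [Fintype G] (hG : ¬ IsSolvable G)
    (R : Subgroup G) (hR : IsSolvableRadical R) :
    ¬ ∃ x : {x : G // x ∉ R}, ∀ y, y ≠ x → (nonSolvableGraph G R).Adj x y :=
  stmt14_general R hR
end
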